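/- For all nonnegative integers m and n, the fully degenerate Bell numbers satisfy the Spivey-type recurrence Bel_{n+m,λ} = Σ_{l=0}^n Σ_{k=0}^m (1)_{k,λ} {m brace k}_λ C(n,l) Bel_{l,λ} F_{n−l,λ}^{(k)}(−λ, k−mλ). -/

import Mathlib

/-!
The exponential generating function of `Bel_{n,λ}` is `B = e_λ(e_λ(t) - 1)`. The chain rule and
`(1 + λt) e_λ^{1-λ}(t) = e_λ(t)` give `B' · (1 + λ(e_λ(t) - 1)) = B · e_λ^{1-λ}(t)`. From this, by
induction on `m` with the recurrence `{m+1 brace k}_λ = {m brace k-1}_λ + (k - mλ) {m brace k}_λ`,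
`B^{(m)} = Σ_k (1)_{k,λ} {m brace k}_λ B (1 + λ(e_λ(t) - 1))^{-k} e_λ^{k-mλ}(t)`, and comparing
the coefficients of `t^n / n!` is the recurrence. The numbers `S` of the statement are read off
from the generating functions `(e_λ(t) - 1)^k / k!`, because evaluating the falling factorials at
`0, …, n` gives a triangular system.
-/
open PowerSeries

/-- The degenerate falling factorial `(x)_{n,λ}`. -/
def degFall (lam x : ℝ) (n : ℕ) : ℝ := ∏ i ∈ Finset.range n, (x - i * lam)

/-- The ordinary falling factorial `(x)_k`. -/
def fallF (x : ℝ) (k : ℕ) : ℝ := ∏ i ∈ Finset.range k, (x - i)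

/-- The degenerate exponential `e_λ^y(t) = Σ_{m≥0} (y)_{m,λ} t^m/m!`. -/
noncomputable def degExpP (lam y : ℝ) : PowerSeries ℝ :=
  PowerSeries.mk fun m => degFall lam y m / (Nat.factorial m)

/-- The two-variable degenerate Fubini polynomials of order `k ∈ ℕ`, defined by
`(1/(1 − x(e_λ(t) − 1)))^k e_λ^y(t) = Σ_j F_{j,λ}^{(k)}(x,y) t^j/j!`. -/
noncomputable def degFubiniOrd (lam : ℝ) (k : ℕ) (x y : ℝ) (j : ℕ) : ℝ :=
  (Nat.factorial j : ℝ) * PowerSeries.coeff j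
    (((1 - PowerSeries.C x * (degExpP lam 1 - 1))⁻¹) ^ k * degExpP lam y)

open Finset
open scoped Nat

namespace PowerSeries

variable {R : Type*} [CommRing R]

theorem coeff_X_mul_derivative (f : R⟦X⟧) (n : ℕ) :
    coeff n (X * d⁄dX R f) = n * coeff n f := by
  cases n with
  | zero => simp
  | succ n => rw [coeff_succ_X_mul, coeff_derivative, mul_comm]; push_cast; rfl

theorem coeff_pow_eq_zero_of_lt {f : R⟦X⟧} (hf : constantCoeff f = 0) {n k : ℕ} (h : n < k) :
    coeff n (f ^ k) = 0 :=
  coeff_of_lt_order n <| (Nat.cast_lt.mpr h).trans_le (le_order_pow_of_constantCoeff_eq_zero k hf)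

theorem factorial_mul_coeff_mul (f g : R⟦X⟧) (n : ℕ) :
    n ! * coeff n (f * g) =
      ∑ l ∈ range (n + 1), n.choose l * (l ! * coeff l f) * ((n - l)! * coeff (n - l) g) := by
  rw [coeff_mul, Nat.sum_antidiagonal_eq_sum_range_succ_mk, mul_sum]
  refine sum_congr rfl fun l hl => ?_
  rw [← Nat.choose_mul_factorial_mul_factorial (Nat.le_of_lt_succ (mem_range.mp hl))]
  push_cast
  ring

theorem factorial_mul_coeff_iterate_derivative (f : R⟦X⟧) (n m : ℕ) :
    n ! * coeff n ((d⁄dX R)^[m] f) = (n + m)! * coeff (n + m) f := by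
  rw [coeff_iterate_derivative, ← mul_assoc, ← Nat.cast_mul, Nat.factorial_mul_ascFactorial]

theorem derivative_inv_pow {K : Type*} [Field K] (f : K⟦X⟧) (k : ℕ) :
    d⁄dX K (f⁻¹ ^ k) = -(k * f⁻¹ ^ (k + 1) * d⁄dX K f) := by
  cases k with
  | zero => simp
  | succ k =>
    rw [Derivation.leibniz_pow, derivative_inv', Nat.add_sub_cancel, nsmul_eq_mul, smul_eq_mul]
    ring

end PowerSeries

theorem sum_range_shift_of_eq_zero {M : Type*} [AddCommMonoid M] {f : ℕ → M} {n : ℕ}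
    (h0 : f 0 = 0) (hn : f n = 0) : ∑ k ∈ range n, f (k + 1) = ∑ k ∈ range n, f k := by
  have hbot := sum_range_succ' f n
  rw [h0, add_zero, sum_range_succ, hn, add_zero] at hbot
  exact hbot.symm

section DegenerateExponential

variable (lam : ℝ)

theorem degFall_succ (x : ℝ) (n : ℕ) : degFall lam x (n + 1) = degFall lam x n * (x - n * lam) :=
  prod_range_succ _ n

theorem degFall_succ' (x : ℝ) (n : ℕ) : degFall lam x (n + 1) = x * degFall lam (x - lam) n := by
  rw [degFall, degFall, prod_range_succ', mul_comm]
  simp only [Nat.cast_zero, zero_mul, sub_zero, Nat.cast_succ, add_mul, one_mul, sub_right_comm,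
    sub_add_eq_sub_sub]

@[simp]
theorem coeff_degExpP (y : ℝ) (n : ℕ) : coeff n (degExpP lam y) = degFall lam y n / n ! :=
  coeff_mk _ _

@[simp]
theorem constantCoeff_degExpP (y : ℝ) : constantCoeff (degExpP lam y) = 1 := by
  simp [← coeff_zero_eq_constantCoeff_apply, degFall]

theorem derivative_degExpP (a : ℝ) : d⁄dX ℝ (degExpP lam a) = C a * degExpP lam (a - lam) := by
  ext n
  rw [coeff_derivative, coeff_C_mul, coeff_degExpP, coeff_degExpP, degFall_succ',
    Nat.factorial_succ]
  push_cast
  field_simp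

theorem one_add_C_mul_X_mul_degExpP (a : ℝ) :
    (1 + C lam * X) * degExpP lam (a - lam) = degExpP lam a := by
  ext n
  rw [add_mul, one_mul, mul_assoc, map_add, coeff_C_mul]
  cases n with
  | zero => simp [degFall]
  | succ n =>
    rw [coeff_succ_X_mul, coeff_degExpP, coeff_degExpP, coeff_degExpP, degFall_succ,
      degFall_succ', Nat.factorial_succ]
    push_cast
    field_simp
    ring

theorem one_add_C_mul_X_mul_derivative_degExpP (a : ℝ) :
    (1 + C lam * X) * d⁄dX ℝ (degExpP lam a) = C a * degExpP lam a := by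
  rw [derivative_degExpP, mul_left_comm, one_add_C_mul_X_mul_degExpP]

theorem eq_C_mul_degExpP_of_derivative {a : ℝ} {f : ℝ⟦X⟧}
    (hf : (1 + C lam * X) * d⁄dX ℝ f = C a * f) : f = C (constantCoeff f) * degExpP lam a := by
  ext n
  induction n with
  | zero => simp [degFall]
  | succ n ih =>
    rw [coeff_C_mul, coeff_degExpP] at ih ⊢
    have hn := congrArg (coeff n) hf
    rw [add_mul, one_mul, mul_assoc, map_add, coeff_C_mul, coeff_C_mul, coeff_X_mul_derivative,
      coeff_derivative, ih] at hn
    rw [degFall_succ, Nat.factorial_succ]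
    push_cast
    field_simp at hn ⊢
    linear_combination hn

theorem degExpP_add (a b : ℝ) : degExpP lam (a + b) = degExpP lam a * degExpP lam b := by
  have h : (1 + C lam * X) * d⁄dX ℝ (degExpP lam a * degExpP lam b) =
      C (a + b) * (degExpP lam a * degExpP lam b) := by
    have ha := one_add_C_mul_X_mul_derivative_degExpP lam a
    have hb := one_add_C_mul_X_mul_derivative_degExpP lam b
    rw [Derivation.leibniz, smul_eq_mul, smul_eq_mul, map_add]
    linear_combination degExpP lam b * ha + degExpP lam a * hb
  rw [eq_C_mul_degExpP_of_derivative lam h]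
  simp

theorem degExpP_zero : degExpP lam 0 = 1 := by
  have h : (1 + C lam * X) * d⁄dX ℝ (1 : ℝ⟦X⟧) = C 0 * 1 := by simp
  simpa using (eq_C_mul_degExpP_of_derivative lam h).symm

theorem degExpP_natCast (M : ℕ) : degExpP lam M = degExpP lam 1 ^ M := by
  induction M with
  | zero => simpa using degExpP_zero lam
  | succ M ih => rw [Nat.cast_succ, degExpP_add, ih, pow_succ]

end DegenerateExponential

theorem fallF_natCast (M k : ℕ) : fallF M k = M.descFactorial k := by
  rw [fallF, ← descPochhammer_eval_eq_prod_range, descPochhammer_eval_eq_descFactorial]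

theorem eq_zero_of_sum_mul_fallF_natCast_eq_zero {c : ℕ → ℝ} {n : ℕ}
    (h : ∀ M ≤ n, ∑ k ∈ range (n + 1), c k * fallF M k = 0) : ∀ k ≤ n, c k = 0 := by
  intro k
  induction k using Nat.strong_induction_on with
  | _ k ih =>
    intro hk
    have hsum := h k hk
    rw [sum_eq_single k (fun j hj hjk => ?_) (fun hk' => absurd (mem_range.mpr (by omega)) hk'),
      fallF_natCast, Nat.descFactorial_self] at hsum
    · exact (mul_eq_zero.mp hsum).resolve_right (by positivity)
    · rcases Nat.lt_or_gt_of_ne hjk with hj' | hj'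
      · rw [ih j hj' (by omega), zero_mul]
      · rw [fallF_natCast, Nat.descFactorial_eq_zero_iff_lt.mpr hj', Nat.cast_zero, mul_zero]

section DegenerateStirling

variable (lam : ℝ)

theorem constantCoeff_degExpP_sub_one : constantCoeff (degExpP lam 1 - 1) = 0 := by simp

/-- `{m brace k}_λ`, through its generating function
`(e_λ(t) - 1)^k / k! = Σ_m {m brace k}_λ t^m / m!`. -/
noncomputable def degStirling2 (m k : ℕ) : ℝ := m ! / k ! * coeff m ((degExpP lam 1 - 1) ^ k)

theorem degStirling2_of_lt {m k : ℕ} (h : m < k) : degStirling2 lam m k = 0 := by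
  rw [degStirling2, coeff_pow_eq_zero_of_lt (constantCoeff_degExpP_sub_one lam) h, mul_zero]

theorem degStirling2_zero_zero : degStirling2 lam 0 0 = 1 := by simp [degStirling2]

theorem degStirling2_succ_zero (m : ℕ) : degStirling2 lam (m + 1) 0 = 0 := by
  simp [degStirling2, coeff_one]

theorem degStirling2_succ_succ (m k : ℕ) :
    degStirling2 lam (m + 1) (k + 1) =
      degStirling2 lam m k + (k + 1 - m * lam) * degStirling2 lam m (k + 1) := by
  simp only [degStirling2, Nat.factorial_succ, Nat.cast_mul, Nat.cast_succ]
  set g := degExpP lam 1 - 1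
  -- `(1 + λt) g' = 1 + g` turns into a relation between the coefficients of `g^k` and `g^(k+1)`.
  have hode : (1 + C lam * X) * d⁄dX ℝ (g ^ (k + 1)) = C ((k : ℝ) + 1) * (g ^ k + g ^ (k + 1)) := by
    have h := one_add_C_mul_X_mul_degExpP lam 1
    rw [Derivation.leibniz_pow, Nat.add_sub_cancel, smul_eq_mul, nsmul_eq_mul, map_sub,
      derivative_degExpP, Derivation.map_one_eq_zero, sub_zero, map_one, one_mul]
    rw [show degExpP lam 1 = 1 + g by ring] at h
    rw [map_add, map_one, map_natCast]
    push_cast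
    linear_combination ((k : ℝ⟦X⟧) + 1) * g ^ k * h
  have hm := congrArg (coeff m) hode
  rw [add_mul, one_mul, mul_assoc, map_add, coeff_C_mul, coeff_X_mul_derivative, coeff_derivative,
    coeff_C_mul, map_add] at hm
  field_simp
  linear_combination hm

theorem degFall_natCast_eq_sum {M n : ℕ} (h : M ≤ n) :
    degFall lam M n = ∑ k ∈ range (n + 1), degStirling2 lam n k * fallF M k := by
  have hexp : degFall lam M n = n ! * coeff n (degExpP lam M) := by
    rw [coeff_degExpP]
    field_simp
  rw [hexp, degExpP_natCast, show degExpP lam 1 = (degExpP lam 1 - 1) + 1 by ring, add_pow,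
    map_sum, mul_sum]
  refine (sum_subset (range_subset_range.mpr (by omega)) fun k _ hk => ?_).trans
    (sum_congr rfl fun k _ => ?_)
  · rw [mem_range, not_lt] at hk
    simp [Nat.choose_eq_zero_of_lt (Nat.lt_of_lt_of_le (Nat.lt_succ_self M) hk)]
  · rw [one_pow, mul_one, ← map_natCast C, coeff_mul_C, fallF_natCast,
      Nat.descFactorial_eq_factorial_mul_choose, degStirling2]
    push_cast
    field_simp

theorem eq_degStirling2_of_degFall_eq {S : ℕ → ℕ → ℝ} {n : ℕ}
    (hS : ∀ z : ℝ, degFall lam z n = ∑ k ∈ range (n + 1), S n k * fallF z k) {k : ℕ}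
    (hk : k ≤ n) : S n k = degStirling2 lam n k :=
  sub_eq_zero.mp <| eq_zero_of_sum_mul_fallF_natCast_eq_zero
    (c := fun j => S n j - degStirling2 lam n j)
    (fun M hM => by simp only [sub_mul, sum_sub_distrib, ← hS, ← degFall_natCast_eq_sum lam hM,
      sub_self]) k hk

end DegenerateStirling

section DegenerateBell

variable (lam : ℝ)

/-- `e_λ(e_λ(t) - 1) = Σ_n Bel_{n,λ} t^n / n!`. -/
noncomputable def degBellSeries : ℝ⟦X⟧ := (degExpP lam 1).subst (degExpP lam 1 - 1)

theorem hasSubst_degExpP_sub_one : HasSubst (degExpP lam 1 - 1) :=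
  HasSubst.of_constantCoeff_zero' (constantCoeff_degExpP_sub_one lam)

theorem factorial_mul_coeff_degBellSeries (n : ℕ) :
    n ! * coeff n (degBellSeries lam) =
      ∑ k ∈ range (n + 1), degStirling2 lam n k * degFall lam 1 k := by
  rw [degBellSeries, coeff_subst' (hasSubst_degExpP_sub_one lam),
    finsum_eq_sum_of_support_subset (s := range (n + 1)), mul_sum]
  · refine sum_congr rfl fun k _ => ?_
    rw [coeff_degExpP, smul_eq_mul, degStirling2]
    field_simp
  · intro k hk
    rw [Function.mem_support] at hk
    rw [coe_range, Set.mem_Iio]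
    by_contra hnk
    exact hk (by rw [coeff_pow_eq_zero_of_lt (constantCoeff_degExpP_sub_one lam) (by omega),
      smul_zero])

theorem derivative_degBellSeries_mul :
    d⁄dX ℝ (degBellSeries lam) * (1 + C lam * (degExpP lam 1 - 1)) =
      degBellSeries lam * degExpP lam (1 - lam) := by
  have hg := hasSubst_degExpP_sub_one lam
  have hU : (1 + C lam * (degExpP lam 1 - 1)) * (degExpP lam (1 - lam)).subst (degExpP lam 1 - 1) =
      (degExpP lam 1).subst (degExpP lam 1 - 1) := by
    have h := congrArg (substAlgHom hg) (one_add_C_mul_X_mul_degExpP lam 1)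
    rw [map_mul, map_add, map_one, map_mul, substAlgHom_X, ← algebraMap_eq (R := ℝ),
      AlgHom.commutes, coe_substAlgHom] at h
    exact h
  rw [degBellSeries, derivative_subst hg, map_sub, Derivation.map_one_eq_zero, sub_zero,
    derivative_degExpP, map_one, one_mul]
  linear_combination degExpP lam (1 - lam) * hU

theorem derivative_degBellSeries :
    d⁄dX ℝ (degBellSeries lam) =
      degBellSeries lam * (1 + C lam * (degExpP lam 1 - 1))⁻¹ * degExpP lam (1 - lam) := by
  have hU0 : constantCoeff (1 + C lam * (degExpP lam 1 - 1)) ≠ 0 := by simp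
  rw [mul_right_comm, ← derivative_degBellSeries_mul, mul_assoc, PowerSeries.mul_inv_cancel _ hU0,
    mul_one]

noncomputable def bellFubiniTerm (k : ℕ) (y : ℝ) : ℝ⟦X⟧ :=
  degBellSeries lam * ((1 + C lam * (degExpP lam 1 - 1))⁻¹ ^ k * degExpP lam y)

theorem derivative_bellFubiniTerm (k : ℕ) (y : ℝ) :
    d⁄dX ℝ (bellFubiniTerm lam k y) =
      C (1 - k * lam) * bellFubiniTerm lam (k + 1) (y + 1 - lam) +
        C y * bellFubiniTerm lam k (y - lam) := by
  have hexp : degExpP lam (y + 1 - lam) = degExpP lam (1 - lam) * degExpP lam y := by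
    rw [← degExpP_add]
    ring_nf
  simp only [bellFubiniTerm, Derivation.leibniz, smul_eq_mul, derivative_inv_pow,
    derivative_degBellSeries, derivative_degExpP, hexp, map_add, map_mul, map_sub, map_one,
    Derivation.map_one_eq_zero, derivative_C, map_natCast]
  ring

theorem iterate_derivative_degBellSeries (m : ℕ) :
    (d⁄dX ℝ)^[m] (degBellSeries lam) = ∑ k ∈ range (m + 1),
      C (degFall lam 1 k * degStirling2 lam m k) * bellFubiniTerm lam k (k - m * lam) := by
  induction m with
  | zero => simp [degStirling2_zero_zero, degFall, bellFubiniTerm, degExpP_zero]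
  | succ m ih =>
    set W : ℕ → ℝ⟦X⟧ := fun k => bellFubiniTerm lam k (k - (m + 1 : ℕ) * lam) with hW
    have hterm : ∀ k, d⁄dX ℝ (C (degFall lam 1 k * degStirling2 lam m k) *
          bellFubiniTerm lam k (k - m * lam)) =
        C (degFall lam 1 (k + 1) * degStirling2 lam m k) * W (k + 1) +
          C (degFall lam 1 k * ((k - m * lam) * degStirling2 lam m k)) * W k := by
      intro k
      rw [Derivation.leibniz, derivative_C, smul_zero, add_zero, smul_eq_mul,
        derivative_bellFubiniTerm, degFall_succ, hW]
      push_cast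
      rw [show (k : ℝ) - m * lam + 1 - lam = k + 1 - (m + 1) * lam by ring,
        show (k : ℝ) - m * lam - lam = k - (m + 1) * lam by ring]
      simp only [map_mul]
      ring
    have hshift := sum_range_shift_of_eq_zero
      (f := fun k => C (degFall lam 1 k * ((k - m * lam) * degStirling2 lam m k)) * W k)
      (n := m + 1) ?_ ?_
    · rw [Function.iterate_succ_apply', ih, map_sum, sum_congr rfl fun k _ => hterm k,
        sum_add_distrib, ← hshift, ← sum_add_distrib, sum_range_succ' _ (m + 1),
        degStirling2_succ_zero, mul_zero, map_zero, zero_mul, add_zero]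
      refine sum_congr rfl fun k _ => ?_
      show _ = _ * W (k + 1)
      rw [degStirling2_succ_succ, Nat.cast_succ]
      simp only [map_mul, map_add]
      ring
    · cases m with
      | zero => simp
      | succ m => simp [degStirling2_succ_zero]
    · simp [degStirling2_of_lt]

theorem factorial_mul_coeff_bellFubiniTerm (k : ℕ) (y : ℝ) (n : ℕ) :
    n ! * coeff n (bellFubiniTerm lam k y) = ∑ l ∈ range (n + 1),
      n.choose l * (l ! * coeff l (degBellSeries lam)) * degFubiniOrd lam k (-lam) y (n - l) := by
  simp only [bellFubiniTerm, factorial_mul_coeff_mul, degFubiniOrd, map_neg, neg_mul,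
    sub_neg_eq_add]

end DegenerateBell

/-- Spivey-type recurrence for the fully degenerate Bell numbers
`Bel_{n,λ} = Σ_{k=0}^n {n brace k}_λ (1)_{k,λ}`:
`Bel_{n+m,λ} = Σ_{l=0}^n Σ_{k=0}^m (1)_{k,λ} {m brace k}_λ C(n,l) Bel_{l,λ}
F_{n−l,λ}^{(k)}(−λ, k−mλ)`, where `S n k = {n brace k}_λ` is defined by
`(x)_{n,λ} = Σ_k S n k (x)_k`. -/
theorem stmt9 (lam : ℝ) (S : ℕ → ℕ → ℝ)
    (hS : ∀ (n : ℕ) (z : ℝ),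
      degFall lam z n = ∑ k ∈ Finset.range (n + 1), S n k * fallF z k)
    (n m : ℕ) :
    (∑ j ∈ Finset.range (n + m + 1), S (n + m) j * degFall lam 1 j) =
      ∑ l ∈ Finset.range (n + 1), ∑ k ∈ Finset.range (m + 1),
        degFall lam 1 k * S m k * (n.choose l : ℝ) *
          (∑ j ∈ Finset.range (l + 1), S l j * degFall lam 1 j) *
          degFubiniOrd lam k (-lam) ((k : ℝ) - m * lam) (n - l) := by
  have hStirling : ∀ a j, j ≤ a → S a j = degStirling2 lam a j :=
    fun a _ hj => eq_degStirling2_of_degFall_eq lam (hS a) hj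
  have hBell : ∀ a, ∑ j ∈ range (a + 1), S a j * degFall lam 1 j =
      a ! * coeff a (degBellSeries lam) := fun a => by
    rw [factorial_mul_coeff_degBellSeries]
    exact sum_congr rfl fun j hj => by rw [hStirling a j (Nat.lt_succ_iff.mp (mem_range.mp hj))]
  rw [hBell, ← factorial_mul_coeff_iterate_derivative, iterate_derivative_degBellSeries, map_sum,
    mul_sum, sum_comm]
  refine sum_congr rfl fun k hk => ?_
  rw [coeff_C_mul, mul_left_comm, factorial_mul_coeff_bellFubiniTerm, mul_sum]
  refine sum_congr rfl fun l _ => ?_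
  rw [hBell, hStirling m k (Nat.lt_succ_iff.mp (mem_range.mp hk))]
  ring
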